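/- arXiv:2511.12684 — 2 statements merged into one kernel-verified Lean document; each statement's English description precedes it below -/
import Mathlib

section
/- Fix 0 < q < 1 < a < 1/q. The function φ(x) = ((x;q)_∞)² + ((x/a;q)_∞)² is bounded below on ℝ by a strictly positive constant; explicitly, φ(x) ≥ ((√(aq);q)_∞)²·((q/√a;q)_∞)²·min{(1/√a - 1)², 1/((q/√a;q)_∞)²} for all x ∈ ℝ. -/
open Finset Real Filter Topology

private lemma abs_log_one_add_le' {v : ℝ} (hv : |v| ≤ 1/2) : |Real.log (1 + v)| ≤ 2 * |v| := by
  have hv1 : -(1/2) ≤ v := neg_le_of_abs_le hv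
  have hv2 : v ≤ 1/2 := le_of_abs_le hv
  have h1 : (0:ℝ) < 1 + v := by linarith
  have hlogle : Real.log (1 + v) ≤ v := by
    have := Real.log_le_sub_one_of_pos h1; linarith
  have hlogge : v / (1 + v) ≤ Real.log (1 + v) := by
    have h2 : Real.log (1 + v)⁻¹ ≤ (1 + v)⁻¹ - 1 := by
      have := Real.log_le_sub_one_of_pos (inv_pos.mpr h1); linarith
    rw [Real.log_inv] at h2
    have h3 : (1 + v)⁻¹ - 1 = -(v / (1 + v)) := by field_simp; ring
    rw [h3] at h2; linarith
  rw [abs_le]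
  refine ⟨?_, by linarith [le_abs_self v, abs_nonneg v]⟩
  rcases le_or_gt 0 v with h | h
  · have h4 : 0 ≤ v / (1 + v) := by positivity
    have h5 : 0 ≤ |v| := abs_nonneg v
    linarith
  · have habs : |v| = -v := abs_of_neg h
    have h4 : 2 * v ≤ v / (1 + v) := by
      rw [le_div_iff₀ h1]
      nlinarith [mul_nonneg (neg_nonneg.mpr h.le) (by linarith : (0:ℝ) ≤ 1 + 2*v)]
    rw [habs]; linarith

private lemma summable_log_fac {q : ℝ} (hq0 : 0 < q) (hq1 : q < 1) (c : ℝ) :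
    Summable (fun k : ℕ => Real.log (1 - c * q ^ k)) := by
  apply Summable.of_norm_bounded_eventually_nat (g := fun k => 2 * (|c| * q ^ k))
    (((summable_geometric_of_lt_one hq0.le hq1).mul_left |c|).mul_left 2)
  have htend : Tendsto (fun k : ℕ => |c| * q ^ k) atTop (𝓝 0) := by
    simpa using (tendsto_pow_atTop_nhds_zero_of_lt_one hq0.le hq1).const_mul |c|
  filter_upwards [htend.eventually (gt_mem_nhds (by norm_num : (0:ℝ) < 1/2))] with k hk
  have habs : |(-(c * q ^ k))| = |c| * q ^ k := by
    rw [abs_neg, abs_mul, abs_pow, abs_of_pos hq0]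
  have h1 : |(-(c * q ^ k))| ≤ 1/2 := by rw [habs]; exact hk.le
  have h2 := abs_log_one_add_le' h1
  rw [habs] at h2
  have h3 : 1 + -(c * q ^ k) = 1 - c * q ^ k := by ring
  rw [h3] at h2
  simpa [Real.norm_eq_abs] using h2

private lemma fac_pos {q c : ℝ} (hq0 : 0 < q) (hq1 : q < 1) (hc : c < 1) (k : ℕ) :
    0 < 1 - c * q ^ k := by
  rcases le_or_gt c 0 with h | h
  · nlinarith [mul_nonneg (neg_nonneg.2 h) (pow_nonneg hq0.le k)]
  · have h1 : q ^ k ≤ 1 := pow_le_one₀ hq0.le hq1.le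
    nlinarith [mul_le_of_le_one_right h.le h1]

private lemma mult_fac {q : ℝ} (hq0 : 0 < q) (hq1 : q < 1) {c : ℝ} (hc : c < 1) :
    Multipliable (fun k : ℕ => 1 - c * q ^ k) :=
  Real.multipliable_of_summable_log (fun k => fac_pos hq0 hq1 hc k)
    (summable_log_fac hq0 hq1 c)

private lemma tprod_fac_pos {q : ℝ} (hq0 : 0 < q) (hq1 : q < 1) {c : ℝ} (hc : c < 1) :
    0 < ∏' k : ℕ, (1 - c * q ^ k) := by
  have h2 := Real.rexp_tsum_eq_tprod (f := fun k => 1 - c * q ^ k)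
      (fun k => fac_pos hq0 hq1 hc k) (summable_log_fac hq0 hq1 c)
  rw [← h2]
  exact Real.exp_pos _

private lemma tprod_fac_le_one {q c : ℝ} (hq0 : 0 < q) (hq1 : q < 1) (hc0 : 0 ≤ c) (hc1 : c < 1) :
    (∏' k : ℕ, (1 - c * q ^ k)) ≤ 1 := by
  apply hasProd_le_of_prod_le (mult_fac hq0 hq1 hc1).hasProd
  intro s
  exact Finset.prod_le_one (fun i _ => (fac_pos hq0 hq1 hc1 i).le)
    (fun i _ => by nlinarith [mul_nonneg hc0 (pow_nonneg hq0.le i)])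

private lemma tprod_fac_mono {q c d : ℝ} (hq0 : 0 < q) (hq1 : q < 1) (hcd : c ≤ d) (hd : d < 1) :
    (∏' k : ℕ, (1 - d * q ^ k)) ≤ ∏' k : ℕ, (1 - c * q ^ k) := by
  have hc : c < 1 := lt_of_le_of_lt hcd hd
  refine le_of_tendsto_of_tendsto' (mult_fac hq0 hq1 hd).hasProd (mult_fac hq0 hq1 hc).hasProd ?_
  intro s
  exact Finset.prod_le_prod (fun i _ => (fac_pos hq0 hq1 hd i).le)
    (fun i _ => by nlinarith [pow_nonneg hq0.le i])

private lemma tprod_fac_split {q : ℝ} (hq0 : 0 < q) (hq1 : q < 1) {w : ℝ} (n : ℕ)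
    (hw : w * q ^ n < 1) :
    (∏' k : ℕ, (1 - w * q ^ k)) =
      (∏ i ∈ Finset.range n, (1 - w * q ^ i)) * ∏' k : ℕ, (1 - w * q ^ n * q ^ k) := by
  have htail : Multipliable (fun i : ℕ => 1 - w * q ^ (i + n)) := by
    refine (mult_fac hq0 hq1 hw).congr fun i => ?_
    rw [pow_add]; ring
  have h := Multipliable.prod_mul_tprod_nat_mul' (f := fun i => 1 - w * q ^ i) (k := n) htail
  rw [← h]
  congr 1
  exact tprod_congr fun i => by show 1 - w * q ^ (i + n) = _; rw [pow_add]; ring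

private lemma tprod_fac_le_prod_range {q c : ℝ} (hq0 : 0 < q) (hq1 : q < 1)
    (hc0 : 0 ≤ c) (hc1 : c < 1) (n : ℕ) :
    (∏' k : ℕ, (1 - c * q ^ k)) ≤ ∏ j ∈ Finset.range n, (1 - c * q ^ j) := by
  have hcn : c * q ^ n < 1 :=
    lt_of_le_of_lt (mul_le_of_le_one_right hc0 (pow_le_one₀ hq0.le hq1.le)) hc1
  rw [tprod_fac_split hq0 hq1 n hcn]
  have h1 : (∏' k : ℕ, (1 - c * q ^ n * q ^ k)) ≤ 1 :=
    tprod_fac_le_one hq0 hq1 (mul_nonneg hc0 (pow_nonneg hq0.le n)) hcn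
  have hTpos : 0 < ∏' k : ℕ, (1 - c * q ^ n * q ^ k) := tprod_fac_pos hq0 hq1 hcn
  have h2 : 0 ≤ ∏ j ∈ Finset.range n, (1 - c * q ^ j) :=
    Finset.prod_nonneg fun i _ => (fac_pos hq0 hq1 hc1 i).le
  exact mul_le_of_le_one_right h2 h1

private lemma aux_one_sub {u v : ℝ} (hu0 : 0 < u) (hu1 : u ≤ 1) (hv : 1 / u ≤ v) :
    1 - u ≤ v - 1 := by
  have h1 : 1 ≤ v * u := by
    rw [div_le_iff₀ hu0] at hv
    linarith
  nlinarith [sq_nonneg (1 - u)]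

private lemma head_sq {q c : ℝ} (hq0 : 0 < q) (hq1 : q < 1) (hc0 : 0 < c) (hc1 : c < 1)
    {z : ℝ} (n : ℕ) (hz : ∀ k, k < n → 1 / (c * q ^ (n - 1 - k)) ≤ z * q ^ k) :
    (∏ j ∈ Finset.range n, (1 - c * q ^ j)) ^ 2 ≤
      ∏ k ∈ Finset.range n, (1 - z * q ^ k) ^ 2 := by
  rw [← Finset.prod_pow]
  rw [← Finset.prod_range_reflect (fun j => (1 - c * q ^ j) ^ 2) n]
  apply Finset.prod_le_prod (fun i _ => sq_nonneg _)
  intro i hi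
  have hin : i < n := Finset.mem_range.mp hi
  have hu0 : 0 < c * q ^ (n - 1 - i) := mul_pos hc0 (pow_pos hq0 _)
  have hu1 : c * q ^ (n - 1 - i) ≤ 1 :=
    (lt_of_le_of_lt (mul_le_of_le_one_right hc0.le (pow_le_one₀ hq0.le hq1.le)) hc1).le
  have h := aux_one_sub hu0 hu1 (hz i hin)
  have h0 : 0 ≤ 1 - c * q ^ (n - 1 - i) := by linarith
  have he : (1 - z * q ^ i) ^ 2 = (z * q ^ i - 1) ^ 2 := by ring
  rw [he]
  exact pow_le_pow_left₀ h0 h 2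

set_option maxHeartbeats 2000000 in
theorem alSalamCarlitz_phi_lower_bound
    (q a : ℝ) (hq0 : 0 < q) (hq1 : q < 1) (ha : 1 < a) (haq : a < 1 / q) :
    ∀ x : ℝ,
      (∏' k : ℕ, (1 - x * q ^ k)) ^ 2 + (∏' k : ℕ, (1 - (x / a) * q ^ k)) ^ 2 ≥
      (∏' k : ℕ, (1 - Real.sqrt (a * q) * q ^ k)) ^ 2 *
      (∏' k : ℕ, (1 - (q / Real.sqrt a) * q ^ k)) ^ 2 *
      min ((1 / Real.sqrt a - 1) ^ 2)
        (1 / (∏' k : ℕ, (1 - (q / Real.sqrt a) * q ^ k)) ^ 2) := by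
  intro x
  have ha0 : 0 < a := lt_trans one_pos ha
  have haq1 : a * q < 1 := by
    rw [lt_div_iff₀ hq0] at haq; linarith
  set m := Real.sqrt a with hm
  set s := Real.sqrt (a * q) with hs
  have hm2 : m * m = a := Real.mul_self_sqrt ha0.le
  have hmnn : 0 ≤ m := Real.sqrt_nonneg a
  have hm1 : 1 < m := by nlinarith
  have hm0 : 0 < m := lt_trans one_pos hm1
  have hs2 : s * s = a * q := Real.mul_self_sqrt (by positivity)
  have hs0 : 0 < s := Real.sqrt_pos.mpr (by positivity)
  have hs1 : s < 1 := by nlinarith [Real.sqrt_nonneg (a * q)]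
  set r := q / m with hr
  have hr0 : 0 < r := div_pos hq0 hm0
  have hr1 : r < 1 := by
    rw [hr, div_lt_one hm0]; linarith
  set P1 := ∏' k : ℕ, (1 - s * q ^ k) with hP1
  set P2 := ∏' k : ℕ, (1 - r * q ^ k) with hP2
  have hP1pos : 0 < P1 := tprod_fac_pos hq0 hq1 hs1
  have hP2pos : 0 < P2 := tprod_fac_pos hq0 hq1 hr1
  have hinvm : 1 / m < 1 := by rw [div_lt_one hm0]; exact hm1
  have hinvm0 : 0 ≤ 1 - 1 / m := by linarith
  have hminsq : (1 / m - 1) ^ 2 = (1 - 1 / m) ^ 2 := by ring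
  rcases le_or_gt x s with hxs | hxs
  · -- Case 1 : x ≤ √(aq); the first product is already large
    have hf : P1 ≤ ∏' k : ℕ, (1 - x * q ^ k) := tprod_fac_mono hq0 hq1 hxs hs1
    have hf2 : P1 ^ 2 ≤ (∏' k : ℕ, (1 - x * q ^ k)) ^ 2 := pow_le_pow_left₀ hP1pos.le hf 2
    have hrhs : P1 ^ 2 * P2 ^ 2 * min ((1 / m - 1) ^ 2) (1 / P2 ^ 2) ≤ P1 ^ 2 := by
      have h1 : min ((1 / m - 1) ^ 2) (1 / P2 ^ 2) ≤ 1 / P2 ^ 2 := min_le_right _ _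
      have h2 : P1 ^ 2 * P2 ^ 2 * min ((1 / m - 1) ^ 2) (1 / P2 ^ 2)
          ≤ P1 ^ 2 * P2 ^ 2 * (1 / P2 ^ 2) :=
        mul_le_mul_of_nonneg_left h1 (by positivity)
      have h3 : P1 ^ 2 * P2 ^ 2 * (1 / P2 ^ 2) = P1 ^ 2 := by
        field_simp
      linarith
    have hsq : 0 ≤ (∏' k : ℕ, (1 - x / a * q ^ k)) ^ 2 := sq_nonneg _
    have := le_trans hrhs (le_trans hf2 (by linarith : (∏' k : ℕ, (1 - x * q ^ k)) ^ 2 ≤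
      (∏' k : ℕ, (1 - x * q ^ k)) ^ 2 + (∏' k : ℕ, (1 - x / a * q ^ k)) ^ 2))
    exact this
  · -- Case 2 : x > √(aq)
    have hx0 : 0 < x := lt_trans hs0 hxs
    obtain ⟨n, hn1, hn0⟩ : ∃ n : ℕ, x * q ^ (n + 1) ≤ s ∧ s < x * q ^ n := by
      have hex : ∃ n : ℕ, x * q ^ (n + 1) ≤ s := by
        obtain ⟨n, hn⟩ := exists_pow_lt_of_lt_one (div_pos hs0 hx0) hq1
        refine ⟨n, ?_⟩
        have h1 : q ^ (n + 1) ≤ q ^ n := pow_le_pow_of_le_one hq0.le hq1.le (Nat.le_succ n)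
        have h2 : q ^ n < s / x := hn
        have h3 : x * q ^ n < s := by
          rw [lt_div_iff₀ hx0] at h2; linarith
        nlinarith [mul_le_mul_of_nonneg_left h1 hx0.le]
      classical
      refine ⟨Nat.find hex, Nat.find_spec hex, ?_⟩
      rcases Nat.eq_zero_or_pos (Nat.find hex) with h0 | h0
      · rw [h0]; simpa using hxs
      · have hmin := Nat.find_min hex (m := Nat.find hex - 1) (by omega)
        push_neg at hmin
        rwa [Nat.sub_add_cancel h0] at hmin
    have hqn1 : n ≥ 1 → q ^ (n - 1) * q = q ^ n := by
      intro h; rw [← pow_succ]; congr 1; omega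
    rcases le_or_gt (x * q ^ n) m with ht | ht
    · -- Case 2a : x·qⁿ ≤ √a ; bound the second product (argument x/a)
      set y := x / a with hy
      have htail_le : y * q ^ (n + 1) ≤ r := by
        rw [hy, hr, div_mul_eq_mul_div, div_le_div_iff₀ ha0 hm0, pow_succ]
        nlinarith [mul_le_mul_of_nonneg_right ht (mul_pos hq0 hm0).le]
      have htail1 : y * q ^ (n + 1) < 1 := lt_of_le_of_lt htail_le hr1
      have hmid : y * q ^ n ≤ 1 / m := by
        rw [hy, div_mul_eq_mul_div, div_le_div_iff₀ ha0 hm0]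
        nlinarith [mul_le_mul_of_nonneg_right ht hm0.le]
      have hzk : ∀ k, k < n → 1 / (s * q ^ (n - 1 - k)) ≤ y * q ^ k := by
        intro k hk
        have hn1' : 1 ≤ n := by omega
        rw [div_le_iff₀ (by positivity)]
        have hq_eq : q ^ k * q ^ (n - 1 - k) = q ^ (n - 1) := by
          rw [← pow_add]; congr 1; omega
        have key : y * q ^ k * (s * q ^ (n - 1 - k)) = y * s * (q ^ k * q ^ (n - 1 - k)) := by
          ring
        rw [key, hq_eq, hy, div_mul_eq_mul_div, div_mul_eq_mul_div, le_div_iff₀ ha0, one_mul]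
        -- goal : a ≤ x * s * q ^ (n - 1)
        have hqn := hqn1 hn1'
        rw [← hqn] at hn0
        nlinarith [mul_lt_mul_of_pos_left hn0 hs0, pow_nonneg hq0.le (n - 1)]
      have hhead := head_sq hq0 hq1 hs0 hs1 (z := y) n hzk
      have hB1 : P1 ≤ ∏ j ∈ Finset.range n, (1 - s * q ^ j) :=
        tprod_fac_le_prod_range hq0 hq1 hs0.le hs1 n
      have hhead' : P1 ^ 2 ≤ ∏ k ∈ Finset.range n, (1 - y * q ^ k) ^ 2 :=
        le_trans (pow_le_pow_left₀ hP1pos.le hB1 2) hhead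
      have hsplit := tprod_fac_split hq0 hq1 (w := y) (n + 1) htail1
      have htailP : P2 ≤ ∏' k : ℕ, (1 - y * q ^ (n + 1) * q ^ k) :=
        tprod_fac_mono hq0 hq1 htail_le hr1
      have hmid2 : (1 - 1 / m) ^ 2 ≤ (1 - y * q ^ n) ^ 2 := by
        have h2 : 1 - 1 / m ≤ 1 - y * q ^ n := by linarith
        exact pow_le_pow_left₀ hinvm0 h2 2
      have hG2 : (∏' k : ℕ, (1 - y * q ^ k)) ^ 2 =
          (∏ k ∈ Finset.range n, (1 - y * q ^ k) ^ 2) *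
            ((1 - y * q ^ n) ^ 2 * (∏' k : ℕ, (1 - y * q ^ (n + 1) * q ^ k)) ^ 2) := by
        rw [hsplit, Finset.prod_range_succ, Finset.prod_pow]; ring
      have hP2T : P2 ^ 2 ≤ (∏' k : ℕ, (1 - y * q ^ (n + 1) * q ^ k)) ^ 2 :=
        pow_le_pow_left₀ hP2pos.le htailP 2
      have hinner : (1 - 1 / m) ^ 2 * P2 ^ 2 ≤
          (1 - y * q ^ n) ^ 2 * (∏' k : ℕ, (1 - y * q ^ (n + 1) * q ^ k)) ^ 2 :=
        mul_le_mul hmid2 hP2T (sq_nonneg _) (sq_nonneg _)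
      have hfinal : P1 ^ 2 * ((1 - 1 / m) ^ 2 * P2 ^ 2) ≤ (∏' k : ℕ, (1 - y * q ^ k)) ^ 2 := by
        rw [hG2]
        exact mul_le_mul hhead' hinner (by positivity)
          (Finset.prod_nonneg fun i _ => sq_nonneg _)
      have hrhs2 : P1 ^ 2 * P2 ^ 2 * min ((1 / m - 1) ^ 2) (1 / P2 ^ 2) ≤
          P1 ^ 2 * ((1 - 1 / m) ^ 2 * P2 ^ 2) := by
        calc P1 ^ 2 * P2 ^ 2 * min ((1 / m - 1) ^ 2) (1 / P2 ^ 2)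
            ≤ P1 ^ 2 * P2 ^ 2 * (1 / m - 1) ^ 2 :=
              mul_le_mul_of_nonneg_left (min_le_left _ _) (by positivity)
          _ = P1 ^ 2 * ((1 - 1 / m) ^ 2 * P2 ^ 2) := by rw [hminsq]; ring
      have hsq : 0 ≤ (∏' k : ℕ, (1 - x * q ^ k)) ^ 2 := sq_nonneg _
      have : P1 ^ 2 * P2 ^ 2 * min ((1 / m - 1) ^ 2) (1 / P2 ^ 2) ≤
          (∏' k : ℕ, (1 - x * q ^ k)) ^ 2 + (∏' k : ℕ, (1 - y * q ^ k)) ^ 2 := by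
        linarith
      exact this
    · -- Case 2b : x·qⁿ > √a ; bound the first product
      have htail1 : x * q ^ (n + 1) < 1 := lt_of_le_of_lt hn1 hs1
      have hzk : ∀ k, k < n → 1 / (r * q ^ (n - 1 - k)) ≤ x * q ^ k := by
        intro k hk
        have hn1' : 1 ≤ n := by omega
        rw [div_le_iff₀ (by positivity)]
        have hq_eq : q ^ k * q ^ (n - 1 - k) = q ^ (n - 1) := by
          rw [← pow_add]; congr 1; omega
        have key : x * q ^ k * (r * q ^ (n - 1 - k)) = x * r * (q ^ k * q ^ (n - 1 - k)) := by
          ring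
        rw [key, hq_eq, hr]
        have hqn := hqn1 hn1'
        have hrw : x * (q / m) * q ^ (n - 1) = x * q ^ n / m := by
          rw [← hqn]; field_simp
        rw [hrw, le_div_iff₀ hm0, one_mul]
        linarith
      have hhead := head_sq hq0 hq1 hr0 hr1 (z := x) n hzk
      have hB1 : P2 ≤ ∏ j ∈ Finset.range n, (1 - r * q ^ j) :=
        tprod_fac_le_prod_range hq0 hq1 hr0.le hr1 n
      have hhead' : P2 ^ 2 ≤ ∏ k ∈ Finset.range n, (1 - x * q ^ k) ^ 2 :=
        le_trans (pow_le_pow_left₀ hP2pos.le hB1 2) hhead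
      have hsplit := tprod_fac_split hq0 hq1 (w := x) (n + 1) htail1
      have htailP : P1 ≤ ∏' k : ℕ, (1 - x * q ^ (n + 1) * q ^ k) :=
        tprod_fac_mono hq0 hq1 hn1 hs1
      have hmid2 : (1 - 1 / m) ^ 2 ≤ (1 - x * q ^ n) ^ 2 := by
        have h1m : 1 / m * m = 1 := div_mul_cancel₀ 1 hm0.ne'
        have h2 : 1 - 1 / m ≤ x * q ^ n - 1 := by nlinarith [sq_nonneg (m - 1)]
        have he : (1 - x * q ^ n) ^ 2 = (x * q ^ n - 1) ^ 2 := by ring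
        rw [he]
        exact pow_le_pow_left₀ hinvm0 h2 2
      have hG2 : (∏' k : ℕ, (1 - x * q ^ k)) ^ 2 =
          (∏ k ∈ Finset.range n, (1 - x * q ^ k) ^ 2) *
            ((1 - x * q ^ n) ^ 2 * (∏' k : ℕ, (1 - x * q ^ (n + 1) * q ^ k)) ^ 2) := by
        rw [hsplit, Finset.prod_range_succ, Finset.prod_pow]; ring
      have hP1T : P1 ^ 2 ≤ (∏' k : ℕ, (1 - x * q ^ (n + 1) * q ^ k)) ^ 2 :=
        pow_le_pow_left₀ hP1pos.le htailP 2
      have hinner : (1 - 1 / m) ^ 2 * P1 ^ 2 ≤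
          (1 - x * q ^ n) ^ 2 * (∏' k : ℕ, (1 - x * q ^ (n + 1) * q ^ k)) ^ 2 :=
        mul_le_mul hmid2 hP1T (sq_nonneg _) (sq_nonneg _)
      have hfinal : P2 ^ 2 * ((1 - 1 / m) ^ 2 * P1 ^ 2) ≤ (∏' k : ℕ, (1 - x * q ^ k)) ^ 2 := by
        rw [hG2]
        exact mul_le_mul hhead' hinner (by positivity)
          (Finset.prod_nonneg fun i _ => sq_nonneg _)
      have hrhs2 : P1 ^ 2 * P2 ^ 2 * min ((1 / m - 1) ^ 2) (1 / P2 ^ 2) ≤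
          P2 ^ 2 * ((1 - 1 / m) ^ 2 * P1 ^ 2) := by
        calc P1 ^ 2 * P2 ^ 2 * min ((1 / m - 1) ^ 2) (1 / P2 ^ 2)
            ≤ P1 ^ 2 * P2 ^ 2 * (1 / m - 1) ^ 2 :=
              mul_le_mul_of_nonneg_left (min_le_left _ _) (by positivity)
          _ = P2 ^ 2 * ((1 - 1 / m) ^ 2 * P1 ^ 2) := by rw [hminsq]; ring
      have hsq : 0 ≤ (∏' k : ℕ, (1 - x / a * q ^ k)) ^ 2 := sq_nonneg _
      have : P1 ^ 2 * P2 ^ 2 * min ((1 / m - 1) ^ 2) (1 / P2 ^ 2) ≤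
          (∏' k : ℕ, (1 - x * q ^ k)) ^ 2 + (∏' k : ℕ, (1 - x / a * q ^ k)) ^ 2 := by
        linarith
      exact this
end

section
/- Fix 0 < q < 1 and 1 < α < a < β < 1/q. For each n ≥ 0 and every x ∈ [β·q^{1-n}, α·q^{-n}], one has ((x/a;q)_∞)² ≥ (1 - α/a)²·(β/a)^{2n}·q^{-n(n-1)}·((a/β;q)_∞)²·((qα/a;q)_∞)². -/
open Finset Filter Topology

private lemma qaux_pos_factor {q c : ℝ} (hq0 : 0 < q) (hq1 : q < 1) (hc0 : 0 ≤ c)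
    (hc1 : c < 1) (k : ℕ) : 0 < 1 - c * q ^ k := by
  have h1 : q ^ k ≤ 1 := pow_le_one₀ hq0.le hq1.le
  have h2 : 0 < q ^ k := pow_pos hq0 k
  nlinarith

private lemma qaux_multipliable {q c : ℝ} (hq0 : 0 < q) (hq1 : q < 1) (hc0 : 0 ≤ c)
    (hc1 : c < 1) : Multipliable (fun k : ℕ => 1 - c * q ^ k) := by
  have hpos : ∀ k, 0 < 1 - c * q ^ k := qaux_pos_factor hq0 hq1 hc0 hc1
  have hle : ∀ k, 1 - c * q ^ k ≤ 1 := by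
    intro k
    have : 0 ≤ c * q ^ k := by positivity
    linarith
  have hanti : Antitone (fun s : Finset ℕ => ∏ i ∈ s, (1 - c * q ^ i)) := by
    intro s t hst
    dsimp only
    rw [← Finset.prod_sdiff hst]
    exact mul_le_of_le_one_left (Finset.prod_pos fun i _ => hpos i).le
      (Finset.prod_le_one (fun i _ => (hpos i).le) fun i _ => hle i)
  have hbdd : BddBelow (Set.range fun s : Finset ℕ => ∏ i ∈ s, (1 - c * q ^ i)) :=
    ⟨0, by rintro _ ⟨s, rfl⟩; exact (Finset.prod_pos fun i _ => hpos i).le⟩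
  exact ⟨_, tendsto_atTop_ciInf hanti hbdd⟩

private lemma qaux_tprod_le_prod {q c : ℝ} (hq0 : 0 < q) (hq1 : q < 1) (hc0 : 0 ≤ c)
    (hc1 : c < 1) (m : ℕ) :
    ∏' k : ℕ, (1 - c * q ^ k) ≤ ∏ k ∈ Finset.range m, (1 - c * q ^ k) := by
  have hpos : ∀ k, 0 < 1 - c * q ^ k := qaux_pos_factor hq0 hq1 hc0 hc1
  have hle : ∀ k, 1 - c * q ^ k ≤ 1 := by
    intro k
    have : 0 ≤ c * q ^ k := by positivity
    linarith
  have ht := (qaux_multipliable hq0 hq1 hc0 hc1).hasProd.tendsto_prod_nat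
  refine le_of_tendsto ht ?_
  filter_upwards [eventually_ge_atTop m] with N hN
  have hsub : Finset.range m ⊆ Finset.range N := Finset.range_subset_range.2 hN
  rw [← Finset.prod_sdiff hsub]
  exact mul_le_of_le_one_left (Finset.prod_pos fun i _ => hpos i).le
    (Finset.prod_le_one (fun i _ => (hpos i).le) fun i _ => hle i)

private lemma qaux_tprod_nonneg {q c : ℝ} (hq0 : 0 < q) (hq1 : q < 1) (hc0 : 0 ≤ c)
    (hc1 : c < 1) : 0 ≤ ∏' k : ℕ, (1 - c * q ^ k) := by
  have hpos : ∀ k, 0 < 1 - c * q ^ k := qaux_pos_factor hq0 hq1 hc0 hc1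
  have ht := (qaux_multipliable hq0 hq1 hc0 hc1).hasProd.tendsto_prod_nat
  exact ge_of_tendsto' ht fun N => (Finset.prod_pos fun i _ => hpos i).le |>.trans le_rfl
    |>.trans le_rfl

theorem qPochhammer_sq_lower_bound_on_complementary_interval
    (q α a β : ℝ) (hq0 : 0 < q) (hq1 : q < 1)
    (hα : 1 < α) (hαa : α < a) (haβ : a < β) (hβ : β < 1 / q)
    (n : ℕ) (x : ℝ)
    (hx : x ∈ Set.Icc (β * q ^ (1 - (n : ℤ))) (α * q ^ (-(n : ℤ)))) :
    (∏' k : ℕ, (1 - (x / a) * q ^ k)) ^ 2 ≥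
      (1 - α / a) ^ 2 * (β / a) ^ (2 * n) * q ^ (-(n : ℤ) * ((n : ℤ) - 1)) *
      (∏' k : ℕ, (1 - (a / β) * q ^ k)) ^ 2 *
      (∏' k : ℕ, (1 - (q * α / a) * q ^ k)) ^ 2 := by
  obtain ⟨hx1, hx2⟩ := hx
  have hα0 : (0:ℝ) < α := by linarith
  have ha0 : (0:ℝ) < a := by linarith
  have hβ0 : (0:ℝ) < β := by linarith
  have hx0 : 0 < x := lt_of_lt_of_le (by positivity) hx1
  have hqk1 : ∀ j : ℕ, q ^ j ≤ 1 := fun j => pow_le_one₀ hq0.le hq1.le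
  -- key upper bound
  have key1 : ∀ j : ℕ, x * q ^ (n + j) ≤ α * q ^ j := by
    intro j
    have h := mul_le_mul_of_nonneg_right hx2 (pow_pos hq0 (n + j)).le
    have he : α * q ^ (-(n:ℤ)) * q ^ (n + j) = α * q ^ j := by
      rw [mul_assoc, ← zpow_natCast q (n + j), ← zpow_add₀ hq0.ne', ← zpow_natCast q j]
      congr 1
      push_cast
      ring
    linarith [he ▸ h]
  -- key lower bound
  have key2 : 0 < n → β ≤ x * q ^ (n - 1) := by
    intro hn
    have h := mul_le_mul_of_nonneg_right hx1 (pow_pos hq0 (n - 1)).le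
    have he : β * q ^ (1 - (n:ℤ)) * q ^ (n - 1) = β := by
      rw [mul_assoc, ← zpow_natCast q (n - 1), ← zpow_add₀ hq0.ne']
      have h2 : (1 - (n:ℤ)) + ((n - 1 : ℕ) : ℤ) = 0 := by omega
      rw [h2, zpow_zero, mul_one]
    linarith [he ▸ h]
  have hβa : a / β < 1 := (div_lt_one hβ0).2 haβ
  have hβa0 : 0 ≤ a / β := by positivity
  have hqαa : q * α / a < 1 := by
    rw [div_lt_one ha0]
    nlinarith
  have hqαa0 : 0 ≤ q * α / a := by positivity
  -- per-factor bound for k < n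
  have hA : ∀ k, k < n →
      (β / a) ^ 2 * (1 - a / β * q ^ (n - 1 - k)) ^ 2
        ≤ q ^ (2 * (n - 1 - k)) * (1 - x / a * q ^ k) ^ 2 := by
    intro k hk
    set j := n - 1 - k with hj
    have hjk : j + k = n - 1 := by omega
    have hs : 0 < β / a - q ^ j := by
      have h2 : 1 < β / a := (one_lt_div ha0).2 (by linarith)
      linarith [hqk1 j]
    have hxq : β / a ≤ x / a * q ^ (n - 1) := by
      have h := key2 (by omega)
      rw [div_mul_eq_mul_div]
      exact div_le_div_of_nonneg_right h ha0.le
    have hexp : q ^ j * (1 - x / a * q ^ k) = q ^ j - x / a * q ^ (n - 1) := by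
      rw [show n - 1 = j + k from hjk.symm, pow_add]
      ring
    have ht : q ^ j * (1 - x / a * q ^ k) ≤ -(β / a - q ^ j) := by
      rw [hexp]
      linarith
    have hseq : β / a * (1 - a / β * q ^ j) = β / a - q ^ j := by
      field_simp
    have h2 : (β / a - q ^ j) ^ 2 ≤ (q ^ j * (1 - x / a * q ^ k)) ^ 2 := by
      nlinarith [hs, ht]
    calc (β / a) ^ 2 * (1 - a / β * q ^ j) ^ 2
        = (β / a * (1 - a / β * q ^ j)) ^ 2 := by ring
      _ = (β / a - q ^ j) ^ 2 := by rw [hseq]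
      _ ≤ (q ^ j * (1 - x / a * q ^ k)) ^ 2 := h2
      _ = q ^ (2 * j) * (1 - x / a * q ^ k) ^ 2 := by
          rw [two_mul, pow_add]; ring
  -- finite product bound for k < n
  have hP1 : (β / a) ^ (2 * n) * (∏ j ∈ Finset.range n, (1 - a / β * q ^ j)) ^ 2
      ≤ q ^ (n * (n - 1)) * (∏ k ∈ Finset.range n, (1 - x / a * q ^ k)) ^ 2 := by
    have h := Finset.prod_le_prod (s := Finset.range n)
      (f := fun k => (β / a) ^ 2 * (1 - a / β * q ^ (n - 1 - k)) ^ 2)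
      (g := fun k => q ^ (2 * (n - 1 - k)) * (1 - x / a * q ^ k) ^ 2)
      (fun k _ => by positivity) (fun k hk => hA k (Finset.mem_range.1 hk))
    have e1 : ∏ k ∈ Finset.range n, ((β / a) ^ 2 * (1 - a / β * q ^ (n - 1 - k)) ^ 2)
        = (β / a) ^ (2 * n) * (∏ j ∈ Finset.range n, (1 - a / β * q ^ j)) ^ 2 := by
      rw [Finset.prod_mul_distrib, Finset.prod_const, Finset.card_range, ← pow_mul,
        Finset.prod_range_reflect (fun j => (1 - a / β * q ^ j) ^ 2) n,
        Finset.prod_pow]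
    have e2 : ∏ k ∈ Finset.range n, (q ^ (2 * (n - 1 - k)) * (1 - x / a * q ^ k) ^ 2)
        = q ^ (n * (n - 1)) * (∏ k ∈ Finset.range n, (1 - x / a * q ^ k)) ^ 2 := by
      rw [Finset.prod_mul_distrib, Finset.prod_pow_eq_pow_sum, Finset.prod_pow]
      congr 2
      calc ∑ k ∈ Finset.range n, 2 * (n - 1 - k)
          = 2 * ∑ k ∈ Finset.range n, (n - 1 - k) := by rw [Finset.mul_sum]
        _ = 2 * ∑ k ∈ Finset.range n, k := by
            rw [Finset.sum_range_reflect (fun j => j) n]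
        _ = n * (n - 1) := by rw [mul_comm, Finset.sum_range_id_mul_two]
    rw [← e1, ← e2]
    exact h
  -- factor at k = n
  have hB : (1 - α / a) ^ 2 ≤ (1 - x / a * q ^ n) ^ 2 := by
    have h1 : x * q ^ n ≤ α := by
      have := key1 0
      simpa using this
    have h2 : x / a * q ^ n ≤ α / a := by
      rw [div_mul_eq_mul_div]
      exact div_le_div_of_nonneg_right h1 ha0.le
    have h3 : 0 ≤ x / a * q ^ n := by positivity
    have h4 : α / a < 1 := (div_lt_one ha0).2 hαa
    nlinarith
  -- factors beyond n
  have hC : ∀ m : ℕ, (∏ j ∈ Finset.range m, (1 - q * α / a * q ^ j)) ^ 2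
      ≤ (∏ j ∈ Finset.range m, (1 - x / a * q ^ (n + 1 + j))) ^ 2 := by
    intro m
    have hterm : ∀ j ∈ Finset.range m,
        1 - q * α / a * q ^ j ≤ 1 - x / a * q ^ (n + 1 + j) := by
      intro j _
      have h1 := key1 (j + 1)
      have he : x * q ^ (n + (j + 1)) = x * q ^ (n + 1 + j) := by ring_nf
      have he2 : α * q ^ (j + 1) = (q * α) * q ^ j := by rw [pow_succ]; ring
      have h2 : x * q ^ (n + 1 + j) ≤ (q * α) * q ^ j := by
        rw [← he2, ← he]; exact h1
      have h3 : x / a * q ^ (n + 1 + j) ≤ q * α / a * q ^ j := by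
        rw [div_mul_eq_mul_div, div_mul_eq_mul_div]
        exact div_le_div_of_nonneg_right h2 ha0.le
      linarith
    have hnn : ∀ j ∈ Finset.range m, 0 ≤ 1 - q * α / a * q ^ j :=
      fun j _ => (qaux_pos_factor hq0 hq1 hqαa0 hqαa j).le
    have hprodle := Finset.prod_le_prod hnn hterm
    exact pow_le_pow_left₀ (Finset.prod_nonneg hnn) hprodle 2
  -- multipliability of the main product
  have hc' : x / a * q ^ (n + 1) < 1 := by
    have h1 := key1 1
    have h2 : x * q ^ (n + 1) ≤ α * q := by simpa using h1
    have h3 : x * q ^ (n + 1) < a := by nlinarith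
    rw [div_mul_eq_mul_div, div_lt_one ha0]
    linarith
  have hc'0 : 0 ≤ x / a * q ^ (n + 1) := by positivity
  have hmult : Multipliable (fun k : ℕ => 1 - x / a * q ^ k) := by
    apply Multipliable.comp_nat_add (k := n + 1)
    exact (qaux_multipliable hq0 hq1 hc'0 hc').congr fun k => by
      rw [pow_add]; ring
  set L : ℝ := ∏' k : ℕ, (1 - x / a * q ^ k) with hL
  set T1 : ℝ := ∏' k : ℕ, (1 - a / β * q ^ k) with hT1
  set T2 : ℝ := ∏' k : ℕ, (1 - q * α / a * q ^ k) with hT2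
  have hT1nn : 0 ≤ T1 := qaux_tprod_nonneg hq0 hq1 hβa0 hβa
  have hT2nn : 0 ≤ T2 := qaux_tprod_nonneg hq0 hq1 hqαa0 hqαa
  have hT1le : T1 ^ 2 ≤ (∏ j ∈ Finset.range n, (1 - a / β * q ^ j)) ^ 2 :=
    pow_le_pow_left₀ hT1nn (qaux_tprod_le_prod hq0 hq1 hβa0 hβa n) 2
  have hT2le : ∀ m, T2 ^ 2 ≤ (∏ j ∈ Finset.range m, (1 - q * α / a * q ^ j)) ^ 2 :=
    fun m => pow_le_pow_left₀ hT2nn (qaux_tprod_le_prod hq0 hq1 hqαa0 hqαa m) 2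
  -- per-m lower bound
  have hmain : ∀ m : ℕ,
      ((β / a) ^ (2 * n) * T1 ^ 2) * (1 - α / a) ^ 2 * T2 ^ 2
        ≤ q ^ (n * (n - 1)) * (∏ k ∈ Finset.range (n + 1 + m), (1 - x / a * q ^ k)) ^ 2 := by
    intro m
    have hsplit : ∏ k ∈ Finset.range (n + 1 + m), (1 - x / a * q ^ k)
        = (∏ k ∈ Finset.range n, (1 - x / a * q ^ k)) * (1 - x / a * q ^ n)
          * ∏ j ∈ Finset.range m, (1 - x / a * q ^ (n + 1 + j)) := by
      rw [Finset.prod_range_add (fun k => 1 - x / a * q ^ k) (n + 1) m,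
        Finset.prod_range_succ]
    have h1 : (β / a) ^ (2 * n) * T1 ^ 2
        ≤ q ^ (n * (n - 1)) * (∏ k ∈ Finset.range n, (1 - x / a * q ^ k)) ^ 2 :=
      le_trans (mul_le_mul_of_nonneg_left hT1le (by positivity)) hP1
    have h2 : T2 ^ 2 ≤ (∏ j ∈ Finset.range m, (1 - x / a * q ^ (n + 1 + j))) ^ 2 :=
      le_trans (hT2le m) (hC m)
    calc ((β / a) ^ (2 * n) * T1 ^ 2) * (1 - α / a) ^ 2 * T2 ^ 2
        ≤ (q ^ (n * (n - 1)) * (∏ k ∈ Finset.range n, (1 - x / a * q ^ k)) ^ 2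
            * (1 - x / a * q ^ n) ^ 2)
          * (∏ j ∈ Finset.range m, (1 - x / a * q ^ (n + 1 + j))) ^ 2 := by
          apply mul_le_mul (mul_le_mul h1 hB (sq_nonneg _) (by positivity))
            h2 (sq_nonneg _) (by positivity)
      _ = q ^ (n * (n - 1)) * (∏ k ∈ Finset.range (n + 1 + m), (1 - x / a * q ^ k)) ^ 2 := by
          rw [hsplit]; ring
  -- pass to the limit
  have hten := hmult.hasProd.tendsto_prod_nat
  have hidx : Tendsto (fun m : ℕ => n + 1 + m) atTop atTop :=
    (tendsto_add_atTop_nat (n + 1)).congr fun m => by omega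
  have hlim : Tendsto
      (fun m => q ^ (n * (n - 1)) * (∏ k ∈ Finset.range (n + 1 + m), (1 - x / a * q ^ k)) ^ 2)
      atTop (𝓝 (q ^ (n * (n - 1)) * L ^ 2)) :=
    ((hten.comp hidx).pow 2).const_mul _
  have hfinal : ((β / a) ^ (2 * n) * T1 ^ 2) * (1 - α / a) ^ 2 * T2 ^ 2
      ≤ q ^ (n * (n - 1)) * L ^ 2 :=
    ge_of_tendsto' hlim hmain
  -- convert zpow
  have hE : (0:ℝ) < q ^ (n * (n - 1)) := pow_pos hq0 _
  have hzp : q ^ (-(n:ℤ) * ((n:ℤ) - 1)) = (q ^ (n * (n - 1)) : ℝ)⁻¹ := by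
    rw [← zpow_natCast q (n * (n - 1)), ← zpow_neg]
    congr 1
    rcases Nat.eq_zero_or_pos n with hn | hn
    · subst hn; simp
    · have : ((n * (n - 1) : ℕ) : ℤ) = (n : ℤ) * ((n : ℤ) - 1) := by
        push_cast [Nat.cast_sub hn]
        ring
      rw [this]
      ring
  rw [ge_iff_le, hzp,
    show (1 - α / a) ^ 2 * (β / a) ^ (2 * n) * (q ^ (n * (n - 1)))⁻¹ * T1 ^ 2 * T2 ^ 2
      = ((1 - α / a) ^ 2 * (β / a) ^ (2 * n) * T1 ^ 2 * T2 ^ 2) / q ^ (n * (n - 1)) from by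
        ring,
    div_le_iff₀ hE]
  calc (1 - α / a) ^ 2 * (β / a) ^ (2 * n) * T1 ^ 2 * T2 ^ 2
      = ((β / a) ^ (2 * n) * T1 ^ 2) * (1 - α / a) ^ 2 * T2 ^ 2 := by ring
    _ ≤ q ^ (n * (n - 1)) * L ^ 2 := hfinal
    _ = L ^ 2 * q ^ (n * (n - 1)) := by ring
end
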